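/- Let g : Z → Y be Lipschitz with constant K_θ > 0, and let μ : Y → ℝ^d and σ : Y → ℝ^d (σ componentwise nonnegative) satisfy ‖μ(y₁) − μ(y₂)‖² + ‖σ(y₁) − σ(y₂)‖² ≤ K_φ²‖y₁−y₂‖² for some K_φ > 0, and write q(y) := N(μ(y), diag σ(y)²). Then: (i) for every fixed y ∈ Y, the function z ↦ ‖y − g(z)‖ is K_θ-Lipschitz on Z; and (ii) for all y₁, y₂ ∈ Y and every integrable K_θ-Lipschitz function f : Z → ℝ, | E_{z∼q(y₁)} f(z) − E_{z∼q(y₂)} f(z) | ≤ K_φ K_θ ‖y₁ − y₂‖. -/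

import Mathlib

/-!
Part (i) is the reverse triangle inequality. For part (ii), `q(y)` is the image of the standard
Gaussian under the reparametrization `ε ↦ μ(y) + σ(y) ⊙ ε`. Feeding the same `ε` to `y₁` and `y₂`
couples `q(y₁)` with `q(y₂)`, and the difference of the coupled samples is distributed as
`N(μ(y₁) - μ(y₂), diag (σ(y₁) - σ(y₂))²)`, whose second moment is
`‖μ(y₁) - μ(y₂)‖² + ‖σ(y₁) - σ(y₂)‖² ≤ K_φ² ‖y₁ - y₂‖²`. A `K_θ`-Lipschitz `f` therefore has
expectations differing by at most `K_θ` times the first moment of that difference, which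
Cauchy–Schwarz bounds by `K_φ ‖y₁ - y₂‖`.
-/

open MeasureTheory ProbabilityTheory

/-- The diagonal Gaussian measure `N(μ, diag σ²)` on `ℝ^d`: the product of the
one-dimensional Gaussians with mean `μ i` and variance `(σ i)²` (a Dirac mass
whenever `σ i = 0`). -/
noncomputable def gaussianPi {d : ℕ} (μ σ : EuclideanSpace ℝ (Fin d)) :
    Measure (EuclideanSpace ℝ (Fin d)) :=
  (Measure.pi fun i => gaussianReal (μ i) ⟨(σ i) ^ 2, sq_nonneg _⟩).map
    (MeasurableEquiv.toLp 2 (Fin d → ℝ))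

open scoped NNReal

lemma MeasureTheory.MeasurePreserving.integral_comp_of_aestronglyMeasurable {α β G : Type*}
    [MeasurableSpace α] [MeasurableSpace β] [NormedAddCommGroup G] [NormedSpace ℝ G]
    {μ : Measure α} {ν : Measure β} {f : α → β} (hf : MeasurePreserving f μ ν) {g : β → G}
    (hg : AEStronglyMeasurable g ν) :
    ∫ x, g (f x) ∂μ = ∫ y, g y ∂ν := by
  rw [← hf.map_eq] at hg ⊢
  exact (integral_map hf.measurable.aemeasurable hg).symm

lemma sq_integral_le_integral_sq {Ω : Type*} [MeasurableSpace Ω] {P : Measure Ω}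
    [IsProbabilityMeasure P] {X : Ω → ℝ} (hX : MemLp X 2 P) :
    (∫ ω, X ω ∂P) ^ 2 ≤ ∫ ω, X ω ^ 2 ∂P := by
  simpa [variance_eq_sub hX] using variance_nonneg X P

lemma abs_integral_sub_integral_le_of_coupling {Ω E : Type*} [MeasurableSpace Ω]
    [NormedAddCommGroup E] [MeasurableSpace E] {P : Measure Ω} {q₁ q₂ : Measure E}
    {T₁ T₂ : Ω → E} (hT₁ : MeasurePreserving T₁ P q₁) (hT₂ : MeasurePreserving T₂ P q₂)
    {f : E → ℝ} {K : ℝ} (hf : ∀ z z', |f z - f z'| ≤ K * ‖z - z'‖)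
    (hf₁ : Integrable f q₁) (hf₂ : Integrable f q₂)
    (hT : Integrable (fun ω => ‖T₁ ω - T₂ ω‖) P) :
    |∫ z, f z ∂q₁ - ∫ z, f z ∂q₂| ≤ K * ∫ ω, ‖T₁ ω - T₂ ω‖ ∂P := by
  have hi₁ : Integrable (fun ω => f (T₁ ω)) P := hT₁.integrable_comp hf₁.1 |>.mpr hf₁
  have hi₂ : Integrable (fun ω => f (T₂ ω)) P := hT₂.integrable_comp hf₂.1 |>.mpr hf₂
  rw [← hT₁.integral_comp_of_aestronglyMeasurable hf₁.1,
    ← hT₂.integral_comp_of_aestronglyMeasurable hf₂.1, ← integral_sub hi₁ hi₂,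
    ← integral_const_mul]
  calc |∫ ω, f (T₁ ω) - f (T₂ ω) ∂P| ≤ ∫ ω, |f (T₁ ω) - f (T₂ ω)| ∂P :=
        abs_integral_le_integral_abs
    _ ≤ ∫ ω, K * ‖T₁ ω - T₂ ω‖ ∂P :=
        integral_mono (hi₁.sub hi₂).abs (hT.const_mul K) fun ω => hf _ _

lemma gaussianReal_zero_one_map_affine (m s : ℝ) :
    (gaussianReal 0 1).map (fun x => m + s * x) = gaussianReal m ⟨s ^ 2, sq_nonneg s⟩ := by
  have hcomp : (fun x : ℝ => m + s * x) = (fun y => m + y) ∘ (fun x => s * x) := rfl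
  rw [hcomp, ← Measure.map_map (by fun_prop) (by fun_prop), gaussianReal_map_const_mul,
    gaussianReal_map_const_add, mul_zero, zero_add]
  exact congrArg _ (mul_one _)

lemma integral_sq_gaussianReal (m : ℝ) (v : ℝ≥0) :
    ∫ x, x ^ 2 ∂gaussianReal m v = m ^ 2 + v := by
  have h := variance_eq_sub (memLp_id_gaussianReal (μ := m) (v := v) 2)
  simp only [variance_id_gaussianReal, Pi.pow_apply, id_eq, integral_id_gaussianReal] at h
  linarith

lemma integral_affine_sq_gaussianReal_zero_one (m s : ℝ) :
    ∫ x, (m + s * x) ^ 2 ∂gaussianReal 0 1 = m ^ 2 + s ^ 2 := by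
  rw [← integral_map (f := fun y => y ^ 2) (by fun_prop) (by fun_prop),
    gaussianReal_zero_one_map_affine]
  exact integral_sq_gaussianReal m _

lemma integrable_affine_sq_gaussianReal_zero_one (m s : ℝ) :
    Integrable (fun x => (m + s * x) ^ 2) (gaussianReal 0 1) :=
  ((memLp_const m).add ((memLp_id_gaussianReal 2).const_mul s)).integrable_sq

section gaussianPi

noncomputable abbrev stdGaussianPi (d : ℕ) : Measure (Fin d → ℝ) :=
  Measure.pi fun _ => gaussianReal 0 1

variable {d : ℕ}

def gaussianReparam (m s : EuclideanSpace ℝ (Fin d)) (ε : Fin d → ℝ) :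
    EuclideanSpace ℝ (Fin d) :=
  WithLp.toLp 2 fun i => m i + s i * ε i

lemma gaussianReparam_sub (m₁ s₁ m₂ s₂ : EuclideanSpace ℝ (Fin d)) (ε : Fin d → ℝ) :
    gaussianReparam m₁ s₁ ε - gaussianReparam m₂ s₂ ε =
      gaussianReparam (m₁ - m₂) (s₁ - s₂) ε := by
  ext i
  simp only [gaussianReparam, PiLp.sub_apply]
  ring

lemma measurable_gaussianReparam (m s : EuclideanSpace ℝ (Fin d)) :
    Measurable (gaussianReparam m s) := by
  unfold gaussianReparam; fun_prop

lemma measurePreserving_gaussianReparam (m s : EuclideanSpace ℝ (Fin d)) :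
    MeasurePreserving (gaussianReparam m s) (stdGaussianPi d) (gaussianPi m s) := by
  -- The variance in `gaussianPi` is a bare subtype term, which defeats instance search.
  have hσfin : ∀ i, SigmaFinite (gaussianReal (m i) ⟨s i ^ 2, sq_nonneg _⟩) := fun i => by
    have := instIsProbabilityMeasureGaussianReal (m i) ⟨s i ^ 2, sq_nonneg _⟩
    infer_instance
  have h : MeasurePreserving (fun ε : Fin d → ℝ => fun i => m i + s i * ε i) (stdGaussianPi d)
      (Measure.pi fun i => gaussianReal (m i) ⟨s i ^ 2, sq_nonneg _⟩) :=
    measurePreserving_pi _ _ (hν := hσfin) fun i =>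
      ⟨by fun_prop, gaussianReal_zero_one_map_affine (m i) (s i)⟩
  exact (MeasurableEquiv.toLp 2 (Fin d → ℝ)).measurable.measurePreserving _ |>.comp h

instance (m s : EuclideanSpace ℝ (Fin d)) : IsProbabilityMeasure (gaussianPi m s) :=
  (measurePreserving_gaussianReparam m s).map_eq ▸
    Measure.isProbabilityMeasure_map (measurable_gaussianReparam m s).aemeasurable

lemma integrable_sq_gaussianReparam_apply (m s : EuclideanSpace ℝ (Fin d)) (i : Fin d) :
    Integrable (fun ε => gaussianReparam m s ε i ^ 2) (stdGaussianPi d) :=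
  integrable_comp_eval (μ := fun _ => gaussianReal 0 1) (i := i)
    (integrable_affine_sq_gaussianReal_zero_one (m i) (s i))

lemma integral_sq_gaussianReparam_apply (m s : EuclideanSpace ℝ (Fin d)) (i : Fin d) :
    ∫ ε, gaussianReparam m s ε i ^ 2 ∂stdGaussianPi d = m i ^ 2 + s i ^ 2 :=
  (integral_comp_eval (μ := fun _ => gaussianReal 0 1) (i := i)
    (f := fun x => (m i + s i * x) ^ 2) (by fun_prop)).trans
    (integral_affine_sq_gaussianReal_zero_one (m i) (s i))

lemma integral_norm_sq_gaussianPi (m s : EuclideanSpace ℝ (Fin d)) :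
    ∫ z, ‖z‖ ^ 2 ∂gaussianPi m s = ‖m‖ ^ 2 + ‖s‖ ^ 2 := by
  rw [← (measurePreserving_gaussianReparam m s).integral_comp_of_aestronglyMeasurable
    (by fun_prop)]
  simp only [EuclideanSpace.real_norm_sq_eq]
  rw [integral_finsetSum _ fun i _ => integrable_sq_gaussianReparam_apply m s i,
    ← Finset.sum_add_distrib]
  exact Finset.sum_congr rfl fun i _ => integral_sq_gaussianReparam_apply m s i

lemma integrable_norm_sq_gaussianPi (m s : EuclideanSpace ℝ (Fin d)) :
    Integrable (fun z => ‖z‖ ^ 2) (gaussianPi m s) := by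
  rw [← (measurePreserving_gaussianReparam m s).integrable_comp (by fun_prop)]
  simp only [Function.comp_def, EuclideanSpace.real_norm_sq_eq]
  exact integrable_finsetSum _ fun i _ => integrable_sq_gaussianReparam_apply m s i

lemma memLp_norm_gaussianPi (m s : EuclideanSpace ℝ (Fin d)) :
    MemLp (fun z => ‖z‖) 2 (gaussianPi m s) :=
  (memLp_two_iff_integrable_sq (by fun_prop)).mpr (integrable_norm_sq_gaussianPi m s)

lemma integral_norm_gaussianPi_le (m s : EuclideanSpace ℝ (Fin d)) :
    ∫ z, ‖z‖ ∂gaussianPi m s ≤ √(‖m‖ ^ 2 + ‖s‖ ^ 2) := by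
  rw [Real.le_sqrt (integral_nonneg fun _ => norm_nonneg _) (by positivity),
    ← integral_norm_sq_gaussianPi]
  exact sq_integral_le_integral_sq (memLp_norm_gaussianPi m s)

theorem abs_integral_gaussianPi_sub_le {f : EuclideanSpace ℝ (Fin d) → ℝ} {K : ℝ} (hK : 0 ≤ K)
    (hf : ∀ z z', |f z - f z'| ≤ K * ‖z - z'‖) {m₁ s₁ m₂ s₂ : EuclideanSpace ℝ (Fin d)}
    (hf₁ : Integrable f (gaussianPi m₁ s₁)) (hf₂ : Integrable f (gaussianPi m₂ s₂)) :
    |∫ z, f z ∂gaussianPi m₁ s₁ - ∫ z, f z ∂gaussianPi m₂ s₂| ≤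
      K * √(‖m₁ - m₂‖ ^ 2 + ‖s₁ - s₂‖ ^ 2) := by
  have hΔ := measurePreserving_gaussianReparam (m₁ - m₂) (s₁ - s₂)
  have hcoupling : ∫ ε, ‖gaussianReparam m₁ s₁ ε - gaussianReparam m₂ s₂ ε‖ ∂stdGaussianPi d =
      ∫ z, ‖z‖ ∂gaussianPi (m₁ - m₂) (s₁ - s₂) := by
    simp only [gaussianReparam_sub]
    exact hΔ.integral_comp_of_aestronglyMeasurable (g := fun z => ‖z‖) (by fun_prop)
  have hint : Integrable (fun ε => ‖gaussianReparam m₁ s₁ ε - gaussianReparam m₂ s₂ ε‖)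
      (stdGaussianPi d) := by
    simp only [gaussianReparam_sub]
    exact (hΔ.integrable_comp (g := fun z => ‖z‖) (by fun_prop)).mpr
      ((memLp_norm_gaussianPi _ _).integrable one_le_two)
  calc _ ≤ K * ∫ ε, ‖gaussianReparam m₁ s₁ ε - gaussianReparam m₂ s₂ ε‖ ∂stdGaussianPi d :=
        abs_integral_sub_integral_le_of_coupling (measurePreserving_gaussianReparam m₁ s₁)
          (measurePreserving_gaussianReparam m₂ s₂) hf hf₁ hf₂ hint
    _ ≤ K * √(‖m₁ - m₂‖ ^ 2 + ‖s₁ - s₂‖ ^ 2) :=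
        hcoupling ▸ mul_le_mul_of_nonneg_left (integral_norm_gaussianPi_le _ _) hK

end gaussianPi

theorem vae_satisfies_continuity_assumption_general {d D : ℕ}
    (g : EuclideanSpace ℝ (Fin d) → EuclideanSpace ℝ (Fin D))
    (Kθ : ℝ) (hKθ : 0 < Kθ)
    (hg : ∀ z₁ z₂ : EuclideanSpace ℝ (Fin d), ‖g z₁ - g z₂‖ ≤ Kθ * ‖z₁ - z₂‖)
    (Kφ : ℝ) (hKφ : 0 < Kφ)
    (μe σe : EuclideanSpace ℝ (Fin D) → EuclideanSpace ℝ (Fin d))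
    (henc : ∀ y₁ y₂ : EuclideanSpace ℝ (Fin D),
      ‖μe y₁ - μe y₂‖ ^ 2 + ‖σe y₁ - σe y₂‖ ^ 2 ≤ Kφ ^ 2 * ‖y₁ - y₂‖ ^ 2) :
    (∀ (y : EuclideanSpace ℝ (Fin D)) (z₁ z₂ : EuclideanSpace ℝ (Fin d)),
      |‖y - g z₁‖ - ‖y - g z₂‖| ≤ Kθ * ‖z₁ - z₂‖) ∧
    (∀ (y₁ y₂ : EuclideanSpace ℝ (Fin D)) (f : EuclideanSpace ℝ (Fin d) → ℝ),
      (∀ z z', |f z - f z'| ≤ Kθ * ‖z - z'‖) →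
      Integrable f (gaussianPi (μe y₁) (σe y₁)) →
      Integrable f (gaussianPi (μe y₂) (σe y₂)) →
      |(∫ z, f z ∂gaussianPi (μe y₁) (σe y₁)) - ∫ z, f z ∂gaussianPi (μe y₂) (σe y₂)| ≤
        Kφ * Kθ * ‖y₁ - y₂‖) := by
  refine ⟨fun y z₁ z₂ => ?_, fun y₁ y₂ f hf hf₁ hf₂ => ?_⟩
  · calc |‖y - g z₁‖ - ‖y - g z₂‖| ≤ ‖(y - g z₁) - (y - g z₂)‖ := abs_norm_sub_norm_le _ _
      _ = ‖g z₁ - g z₂‖ := by rw [sub_sub_sub_cancel_left, norm_sub_rev]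
      _ ≤ Kθ * ‖z₁ - z₂‖ := hg z₁ z₂
  · have hsqrt : √(‖μe y₁ - μe y₂‖ ^ 2 + ‖σe y₁ - σe y₂‖ ^ 2) ≤ Kφ * ‖y₁ - y₂‖ :=
      Real.sqrt_le_iff.mpr ⟨by positivity, by rw [mul_pow]; exact henc y₁ y₂⟩
    calc _ ≤ Kθ * √(‖μe y₁ - μe y₂‖ ^ 2 + ‖σe y₁ - σe y₂‖ ^ 2) :=
          abs_integral_gaussianPi_sub_le hKθ.le hf hf₁ hf₂
      _ ≤ Kθ * (Kφ * ‖y₁ - y₂‖) := mul_le_mul_of_nonneg_left hsqrt hKθ.le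
      _ = Kφ * Kθ * ‖y₁ - y₂‖ := by ring

/-- **The VAE satisfies the continuity assumption of the PAC-Bayes framework** (Lemma 1).
Given a `K_θ`-Lipschitz decoder `g : Z → Y` and an encoder `(μ,σ) : Y → ℝ^d × ℝ^d_{≥0}`
with `‖μ(y₁) − μ(y₂)‖² + ‖σ(y₁) − σ(y₂)‖² ≤ K_φ² ‖y₁−y₂‖²`, writing
`q(y) := N(μ(y), diag σ(y)²)`:
(i) for every fixed `y`, the map `z ↦ ‖y − g(z)‖` is `K_θ`-Lipschitz; and
(ii) for all `y₁, y₂` and every integrable `K_θ`-Lipschitz `f : Z → ℝ`,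
`|E_{z∼q(y₁)} f(z) − E_{z∼q(y₂)} f(z)| ≤ K_φ K_θ ‖y₁ − y₂‖`. -/
theorem vae_satisfies_continuity_assumption {d D : ℕ}
    (g : EuclideanSpace ℝ (Fin d) → EuclideanSpace ℝ (Fin D))
    (Kθ : ℝ) (hKθ : 0 < Kθ)
    (hg : ∀ z₁ z₂ : EuclideanSpace ℝ (Fin d), ‖g z₁ - g z₂‖ ≤ Kθ * ‖z₁ - z₂‖)
    (Kφ : ℝ) (hKφ : 0 < Kφ)
    (μe σe : EuclideanSpace ℝ (Fin D) → EuclideanSpace ℝ (Fin d))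
    (hσ : ∀ y i, 0 ≤ σe y i)
    (henc : ∀ y₁ y₂ : EuclideanSpace ℝ (Fin D),
      ‖μe y₁ - μe y₂‖ ^ 2 + ‖σe y₁ - σe y₂‖ ^ 2 ≤ Kφ ^ 2 * ‖y₁ - y₂‖ ^ 2) :
    (∀ (y : EuclideanSpace ℝ (Fin D)) (z₁ z₂ : EuclideanSpace ℝ (Fin d)),
      |‖y - g z₁‖ - ‖y - g z₂‖| ≤ Kθ * ‖z₁ - z₂‖) ∧
    (∀ (y₁ y₂ : EuclideanSpace ℝ (Fin D)) (f : EuclideanSpace ℝ (Fin d) → ℝ),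
      (∀ z z', |f z - f z'| ≤ Kθ * ‖z - z'‖) →
      Integrable f (gaussianPi (μe y₁) (σe y₁)) →
      Integrable f (gaussianPi (μe y₂) (σe y₂)) →
      |(∫ z, f z ∂gaussianPi (μe y₁) (σe y₁)) - ∫ z, f z ∂gaussianPi (μe y₂) (σe y₂)| ≤
        Kφ * Kθ * ‖y₁ - y₂‖) :=
  vae_satisfies_continuity_assumption_general g Kθ hKθ hg Kφ hKφ μe σe henc
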